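/- Let I ∈ ℝ^{2×2} be invertible, let II ∈ ℝ^{2×2} with II ≠ 0, and set L := I⁻¹ · II. Then for all matrices G, R ∈ ℝ^{2×2} one has ‖G‖² + ‖R − 2 G L‖² ≥ min{ 1/4 , (det I)² / (16 ‖Cof I‖² ‖II‖²) } · ( ‖G‖² + ‖R‖² ). (Explicit-constant form of the estimate underlying Lemma 4.2 with Weingarten-type operator L = I⁻¹ II.) -/

import Mathlib

open Matrix

/-- Squared Frobenius norm of a real matrix: ‖X‖² = tr(X Xᵀ). -/
noncomputable def frobSq {m n : ℕ} (X : Matrix (Fin m) (Fin n) ℝ) : ℝ :=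
  Matrix.trace (X * Xᵀ)

/-- Cofactor matrix of a 2×2 matrix: Cof I = det(I)·I⁻ᵀ. -/
noncomputable def cof (A : Matrix (Fin 2) (Fin 2) ℝ) : Matrix (Fin 2) (Fin 2) ℝ :=
  A.det • (A⁻¹)ᵀ

lemma frobSq_eq_sum {m n : ℕ} (X : Matrix (Fin m) (Fin n) ℝ) :
    frobSq X = ∑ i, ∑ j, X i j ^ 2 := by
  simp [frobSq, Matrix.trace, Matrix.diag, Matrix.mul_apply, Matrix.transpose_apply, sq]

lemma frobSq_nonneg {m n : ℕ} (X : Matrix (Fin m) (Fin n) ℝ) : 0 ≤ frobSq X := by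
  rw [frobSq_eq_sum]; positivity

lemma frobSq_pos {m n : ℕ} {X : Matrix (Fin m) (Fin n) ℝ} (hX : X ≠ 0) : 0 < frobSq X := by
  rcases (frobSq_nonneg X).lt_or_eq with h | h
  · exact h
  exfalso; apply hX
  ext i j
  have h1 : ∀ i ∈ Finset.univ, (0:ℝ) ≤ ∑ j, X i j ^ 2 := fun i _ => by positivity
  have h2 := (Finset.sum_eq_zero_iff_of_nonneg h1).mp ((frobSq_eq_sum X ▸ h).symm)
  have h3 : ∀ j ∈ Finset.univ, (0:ℝ) ≤ X i j ^ 2 := fun j _ => by positivity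
  have h4 := (Finset.sum_eq_zero_iff_of_nonneg h3).mp (h2 i (Finset.mem_univ i))
  have := h4 j (Finset.mem_univ j)
  simpa [pow_eq_zero_iff] using this

lemma frobSq_smul {m n : ℕ} (c : ℝ) (X : Matrix (Fin m) (Fin n) ℝ) :
    frobSq (c • X) = c ^ 2 * frobSq X := by
  simp [frobSq_eq_sum, Finset.mul_sum, mul_pow]

lemma frobSq_transpose {m n : ℕ} (X : Matrix (Fin m) (Fin n) ℝ) :
    frobSq Xᵀ = frobSq X := by
  rw [frobSq_eq_sum, frobSq_eq_sum, Finset.sum_comm]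
  simp [Matrix.transpose_apply]

lemma frobSq_mul_le {m n p : ℕ} (A : Matrix (Fin m) (Fin n) ℝ)
    (B : Matrix (Fin n) (Fin p) ℝ) :
    frobSq (A * B) ≤ frobSq A * frobSq B := by
  rw [frobSq_eq_sum, frobSq_eq_sum, frobSq_eq_sum]
  calc ∑ i, ∑ j, (A * B) i j ^ 2
      ≤ ∑ i, ∑ j, (∑ k, A i k ^ 2) * (∑ k, B k j ^ 2) := by
        refine Finset.sum_le_sum fun i _ => Finset.sum_le_sum fun j _ => ?_
        rw [Matrix.mul_apply]
        exact Finset.sum_mul_sq_le_sq_mul_sq _ _ _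
    _ = (∑ i, ∑ k, A i k ^ 2) * (∑ j, ∑ k, B k j ^ 2) := by
        rw [← Finset.sum_mul_sum]
    _ = (∑ i, ∑ k, A i k ^ 2) * (∑ k, ∑ j, B k j ^ 2) := by
        congr 1
        exact Finset.sum_comm

/-- Explicit-constant form of the estimate underlying Lemma 4.2 with
Weingarten-type operator `L = I⁻¹ II`. -/
theorem koiter_strain_control_weingarten (I II G R : Matrix (Fin 2) (Fin 2) ℝ)
    (hI : IsUnit I.det) (hII : II ≠ 0) :
    frobSq G + frobSq (R - (2 : ℝ) • (G * (I⁻¹ * II))) ≥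
      min (1 / 4 : ℝ) (I.det ^ 2 / (16 * frobSq (cof I) * frobSq II)) *
        (frobSq G + frobSq R) := by
  have hdet : I.det ≠ 0 := hI.ne_zero
  have hIinv : I⁻¹ ≠ 0 := by
    intro h
    have := Matrix.nonsing_inv_mul I hI
    rw [h] at this
    simp at this
  set d := frobSq I⁻¹ with hd
  set e := frobSq II with he
  have hdpos : 0 < d := frobSq_pos hIinv
  have hepos : 0 < e := frobSq_pos hII
  have hcof : frobSq (cof I) = I.det ^ 2 * d := by
    rw [cof, frobSq_smul, frobSq_transpose]
  -- the constant
  set c := min (1 / 4 : ℝ) (I.det ^ 2 / (16 * frobSq (cof I) * frobSq II)) with hc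
  have hc2 : c ≤ 1 / (16 * d * e) := by
    have : I.det ^ 2 / (16 * frobSq (cof I) * frobSq II) = 1 / (16 * d * e) := by
      rw [hcof, ← he]
      field_simp
    rw [hc, this]
    exact min_le_right _ _
  have hc1 : c ≤ 1 / 4 := min_le_left _ _
  have hc0 : 0 ≤ c := by
    apply le_min
    · norm_num
    · rw [hcof, ← he]; positivity
  set g := frobSq G with hg
  set L := I⁻¹ * II with hL
  set s := frobSq (R - (2 : ℝ) • (G * L)) with hs
  have hgnn : 0 ≤ g := frobSq_nonneg G
  have hsnn : 0 ≤ s := frobSq_nonneg _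
  have hGL : frobSq (G * L) ≤ g * frobSq L := frobSq_mul_le G L
  have hLde : frobSq L ≤ d * e := frobSq_mul_le I⁻¹ II
  have hGLnn : 0 ≤ frobSq (G * L) := frobSq_nonneg _
  have hLnn : 0 ≤ frobSq L := frobSq_nonneg _
  -- r ≤ 2 s + 8 frobSq (G*L)
  have hr : frobSq R ≤ 2 * s + 8 * frobSq (G * L) := by
    rw [hs, frobSq_eq_sum, frobSq_eq_sum, frobSq_eq_sum]
    have : ∀ i j : Fin 2, R i j ^ 2 ≤
        2 * (R - (2:ℝ) • (G * L)) i j ^ 2 + 8 * (G * L) i j ^ 2 := by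
      intro i j
      simp only [Matrix.sub_apply, Matrix.smul_apply, smul_eq_mul]
      nlinarith [sq_nonneg (R i j - 4 * (G * L) i j)]
    calc ∑ i, ∑ j, R i j ^ 2
        ≤ ∑ i, ∑ j, (2 * (R - (2:ℝ) • (G * L)) i j ^ 2 + 8 * (G * L) i j ^ 2) :=
          Finset.sum_le_sum fun i _ => Finset.sum_le_sum fun j _ => this i j
      _ = 2 * (∑ i, ∑ j, (R - (2:ℝ) • (G * L)) i j ^ 2) +
            8 * (∑ i, ∑ j, (G * L) i j ^ 2) := by
          simp only [Finset.mul_sum, ← Finset.sum_add_distrib]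
    
  -- combine
  have key : c * (g + frobSq R) ≤ g + s := by
    have h8 : 8 * c * frobSq (G * L) ≤ g / 2 := by
      have h1 : frobSq (G * L) ≤ g * (d * e) :=
        hGL.trans (by nlinarith)
      have h2 : c * (16 * d * e) ≤ 1 := by
        have := mul_le_mul_of_nonneg_right hc2 (by positivity : (0:ℝ) ≤ 16 * d * e)
        rwa [div_mul_cancel₀] at this
        positivity
      nlinarith [mul_nonneg hc0 hGLnn, mul_pos hdpos hepos]
    have h2s : 2 * c * s ≤ s / 2 := by nlinarith
    nlinarith [mul_nonneg hc0 hgnn]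
  exact key
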